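/- arXiv:2302.04086 — 2 statements merged into one kernel-verified Lean document; each statement's English description precedes it below -/
import Mathlib

section
/- For every n ≥ 1 and every unit pure quaternion μ, the discrete quaternion Fourier transform matrix F_μ is unitary: F_μᴴ F_μ = F_μ F_μᴴ = Iₙ. -/
open Quaternion Matrix

/-- `ω = exp(−2πμ/n)`, the quaternion exponential of `(−2π/n)·μ`. -/
noncomputable def qomega (n : ℕ) (μ : ℍ[ℝ]) : ℍ[ℝ] :=
  NormedSpace.exp ((-(2 * Real.pi) / n : ℝ) • μ)

/-- The `n×n` discrete quaternion Fourier transform matrix,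
`(F_μ)_{uv} = (1/√n)·ω^{uv}` for `u, v = 0, …, n−1`. -/
noncomputable def qdft (n : ℕ) (μ : ℍ[ℝ]) : Matrix (Fin n) (Fin n) ℍ[ℝ] :=
  Matrix.of fun u v => ((Real.sqrt n)⁻¹ : ℝ) • (qomega n μ) ^ ((u : ℕ) * (v : ℕ))

/-! Since `μ² = -1`, the map `a + bi ↦ a + bμ` (`Complex.liftAux μ`) is a ring embedding
`ℂ → ℍ` sending `ζ⁻¹ = exp(-2πi/n)` to `ω`, so `F_μ` is the image of the classical DFT matrix
and the orthogonality relation `∑ᵤ ζ^{ku} = n·[n ∣ k]` of a primitive `n`-th root of unity carries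
over. Conjugation is handled inside `ℍ`: `μ` is pure, so `star ω = exp(2πμ/n) = ω⁻¹`. -/

section DFTMatrix

variable {R : Type*} (n : ℕ)

def dftMatrix [Monoid R] (ω : R) : Matrix (Fin n) (Fin n) R :=
  of fun u v => ω ^ ((u : ℕ) * v)

theorem dftMatrix_map [Monoid R] {S F : Type*} [Monoid S] [FunLike F R S]
    [MonoidHomClass F R S] (f : F) (ω : R) :
    (dftMatrix n ω).map f = dftMatrix n (f ω) := by
  ext u v
  simp [dftMatrix]

theorem conjTranspose_dftMatrix [Monoid R] [StarMul R] (ω : R) :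
    (dftMatrix n ω)ᴴ = dftMatrix n (star ω) := by
  ext u v
  simp [dftMatrix, star_pow, mul_comm]

end DFTMatrix

namespace IsPrimitiveRoot

variable {K : Type*} [Field K] {ζ : K} {n : ℕ}

theorem geom_sum_zpow_eq_ite (hζ : IsPrimitiveRoot ζ n) (k : ℤ) :
    ∑ i ∈ Finset.range n, (ζ ^ k) ^ i = if (n : ℤ) ∣ k then (n : K) else 0 := by
  split_ifs with hdvd
  · simp [(hζ.zpow_eq_one_iff_dvd k).2 hdvd]
  · have hne : ζ ^ k ≠ 1 := mt (hζ.zpow_eq_one_iff_dvd k).1 hdvd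
    have hpow : (ζ ^ k) ^ n = 1 := by
      rw [← zpow_natCast, ← _root_.zpow_mul, mul_comm, _root_.zpow_mul, hζ.zpow_eq_one,
        _root_.one_zpow]
    rw [geom_sum_eq hne, hpow, sub_self, zero_div]

theorem dftMatrix_inv_mul (hζ : IsPrimitiveRoot ζ n) :
    dftMatrix n ζ⁻¹ * dftMatrix n ζ = n := by
  ext v w
  have hζ0 : ζ ≠ 0 := hζ.ne_zero (Fin.pos v).ne'
  have hterm (u : Fin n) :
      ζ⁻¹ ^ ((v : ℕ) * u) * ζ ^ ((u : ℕ) * w) = (ζ ^ ((w : ℤ) - v)) ^ (u : ℕ) := by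
    rw [← zpow_natCast, ← zpow_natCast, ← zpow_natCast, _root_.inv_zpow', ← zpow_add₀ hζ0,
      ← _root_.zpow_mul]
    push_cast
    ring_nf
  have hdvd : (n : ℤ) ∣ (w : ℤ) - v ↔ v = w := by
    refine ⟨fun h => Fin.ext ?_, fun h => by simp [h]⟩
    have := Int.eq_zero_of_dvd_of_natAbs_lt_natAbs h (by omega)
    omega
  simp only [mul_apply, dftMatrix, of_apply, hterm,
    Fin.sum_univ_eq_sum_range (fun i => (ζ ^ ((w : ℤ) - v)) ^ i), geom_sum_zpow_eq_ite hζ, hdvd,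
    Matrix.natCast_apply, Nat.cast_ite, Nat.cast_zero]

variable {A F : Type*} [Semiring A] [FunLike F K A] [RingHomClass F K A]

theorem dftMatrix_map_inv_mul (hζ : IsPrimitiveRoot ζ n) (f : F) :
    dftMatrix n (f ζ⁻¹) * dftMatrix n (f ζ) = n := by
  rw [← dftMatrix_map, ← dftMatrix_map, ← Matrix.map_mul, hζ.dftMatrix_inv_mul,
    Matrix.map_natCast (map_zero f), map_natCast]
  rfl

theorem dftMatrix_map_mul_inv (hζ : IsPrimitiveRoot ζ n) (f : F) :
    dftMatrix n (f ζ) * dftMatrix n (f ζ⁻¹) = n := by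
  simpa using hζ.inv.dftMatrix_map_inv_mul f

end IsPrimitiveRoot

theorem Matrix.inv_sqrt_smul_mul_inv_sqrt_smul {A : Type*} [Semiring A] [Algebra ℝ A] {n : ℕ}
    (hn : n ≠ 0) {M N : Matrix (Fin n) (Fin n) A} (h : M * N = n) :
    ((Real.sqrt n)⁻¹ : ℝ) • M * ((Real.sqrt n)⁻¹ : ℝ) • N = 1 := by
  have hc : (Real.sqrt n)⁻¹ * (Real.sqrt n)⁻¹ = (n : ℝ)⁻¹ := by
    rw [← mul_inv, Real.mul_self_sqrt n.cast_nonneg]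
  have hnat : (n : Matrix (Fin n) (Fin n) A) = (n : ℝ) • 1 := by
    rw [Nat.cast_smul_eq_nsmul, nsmul_one]
  rw [smul_mul_smul_comm, h, hc, hnat, smul_smul, inv_mul_cancel₀ (Nat.cast_ne_zero.2 hn),
    one_smul]

theorem Quaternion.mul_self_eq_neg_one_of_re_eq_zero {μ : ℍ[ℝ]} (hre : μ.re = 0)
    (hnorm : ‖μ‖ = 1) : μ * μ = -1 := by
  rw [← sq, sq_eq_neg_normSq.2 hre, normSq_eq_norm_mul_self, hnorm, one_mul, coe_one]

theorem star_qomega {μ : ℍ[ℝ]} (hre : μ.re = 0) (n : ℕ) :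
    star (qomega n μ) = (qomega n μ)⁻¹ := by
  rw [qomega, NormedSpace.star_exp, Quaternion.star_smul, star_eq_neg.2 hre, smul_neg,
    NormedSpace.exp_neg_of_mem_ball ℝ (by simp [NormedSpace.expSeries_radius_eq_top])]

theorem qomega_eq_liftAux {μ : ℍ[ℝ]} (hμ : μ * μ = -1) (n : ℕ) :
    qomega n μ = Complex.liftAux μ hμ (Complex.exp (2 * Real.pi * Complex.I / n))⁻¹ := by
  have hf : Continuous (Complex.liftAux μ hμ) :=
    (Complex.liftAux μ hμ).toLinearMap.continuous_of_finiteDimensional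
  have harg : -(2 * Real.pi * Complex.I / n) = (-(2 * Real.pi) / n : ℝ) • Complex.I := by
    rw [Complex.real_smul]
    push_cast
    ring
  rw [← Complex.exp_neg, harg, Complex.exp_eq_exp_ℂ, NormedSpace.map_exp _ hf, map_smul,
    Complex.liftAux_apply_I, qomega]

theorem qdft_eq_smul_dftMatrix (n : ℕ) (μ : ℍ[ℝ]) :
    qdft n μ = ((Real.sqrt n)⁻¹ : ℝ) • dftMatrix n (qomega n μ) :=
  rfl

theorem conjTranspose_qdft {μ : ℍ[ℝ]} (hre : μ.re = 0) (n : ℕ) :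
    (qdft n μ)ᴴ = ((Real.sqrt n)⁻¹ : ℝ) • dftMatrix n (qomega n μ)⁻¹ := by
  rw [qdft_eq_smul_dftMatrix, ← star_qomega hre, ← conjTranspose_dftMatrix]
  exact Matrix.ext fun u v => Quaternion.star_smul _ _

/-- for every `n ≥ 1` and unit pure quaternion `μ`, the discrete quaternion
Fourier matrix is unitary: `F_μᴴ F_μ = F_μ F_μᴴ = Iₙ`. -/
theorem qdft_unitary (n : ℕ) (hn : 1 ≤ n) (μ : ℍ[ℝ]) (hpure : μ.re = 0) (hunit : ‖μ‖ = 1) :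
    (qdft n μ)ᴴ * qdft n μ = 1 ∧ qdft n μ * (qdft n μ)ᴴ = 1 := by
  have hn0 : n ≠ 0 := Nat.one_le_iff_ne_zero.1 hn
  have hμ : μ * μ = -1 := mul_self_eq_neg_one_of_re_eq_zero hpure hunit
  have hζ := Complex.isPrimitiveRoot_exp n hn0
  rw [conjTranspose_qdft hpure, qdft_eq_smul_dftMatrix, qomega_eq_liftAux hμ, ← map_inv₀,
    inv_inv]
  exact ⟨inv_sqrt_smul_mul_inv_sqrt_smul hn0 (hζ.dftMatrix_map_mul_inv (Complex.liftAux μ hμ)),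
    inv_sqrt_smul_mul_inv_sqrt_smul hn0 (hζ.dftMatrix_map_inv_mul (Complex.liftAux μ hμ))⟩
end

section
/- Let J be the n×n cyclic shift matrix J = circ(e₁) (with entry 1 at position (u,v) exactly when u ≡ v + 1 (mod n), and 0 elsewhere), viewed as a quaternion matrix, and let μ be a unit pure quaternion with ω = exp(−2πμ/n). Then J·F_μᴴ = F_μᴴ·Diag(1, ω, ω², …, ω^{n−1}); in particular the columns of F_μᴴ are eigenvectors of J with eigenvalues 1, ω, …, ω^{n−1}. -/
open Quaternion Matrix

section CyclicShift

variable {n : ℕ} [NeZero n]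

lemma Fin.val_eq_val_add_one_mod_iff (u v : Fin n) :
    (u : ℕ) = ((v : ℕ) + 1) % n ↔ v = u - 1 := by
  rw [eq_sub_iff_add_eq, eq_comm, Fin.ext_iff, Fin.val_add, Fin.val_one', Nat.add_mod_mod]

lemma cyclicShift_mul_apply {R m : Type*} [Semiring R] (A : Matrix (Fin n) m R)
    (u : Fin n) (k : m) :
    ((of fun u v : Fin n => if (u : ℕ) = ((v : ℕ) + 1) % n then (1 : R) else 0) * A) u k =
      A (u - 1) k := by
  simp only [mul_apply, of_apply, Fin.val_eq_val_add_one_mod_iff, ite_mul, one_mul,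
    zero_mul, Finset.sum_ite_eq', Finset.mem_univ, if_true]

lemma pow_val_eq_pow_val_sub_one_mul {M : Type*} [Monoid M] {ξ : M} (hξ : ξ ^ n = 1)
    (u : Fin n) : ξ ^ (u : ℕ) = ξ ^ ((u - 1 : Fin n) : ℕ) * ξ := by
  conv_lhs => rw [← sub_add_cancel u 1, Fin.val_add, Fin.val_one', Nat.add_mod_mod,
    ← pow_eq_pow_mod _ hξ]
  rw [pow_succ]

lemma pow_val_sub_one {M : Type*} [Monoid M] {ξ η : M} (hξ : ξ ^ n = 1) (hξη : ξ * η = 1)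
    (u : Fin n) : ξ ^ ((u - 1 : Fin n) : ℕ) = ξ ^ (u : ℕ) * η := by
  rw [pow_val_eq_pow_val_sub_one_mul hξ u, mul_assoc, hξη, mul_one]

end CyclicShift

section QuaternionDFT

variable {n : ℕ} {μ : ℍ[ℝ]}

lemma qomega_pow_self (hn : n ≠ 0) (hpure : μ.re = 0) (hunit : ‖μ‖ = 1) :
    qomega n μ ^ n = 1 := by
  -- the `NormedSpace.exp` algebra lemmas ask for a normed `ℚ`-algebra structure
  let +nondep : NormedAlgebra ℚ ℍ := .restrictScalars ℚ ℝ ℍ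
  have hangle : (n : ℝ) * (-(2 * Real.pi) / n) = -(2 * Real.pi) := by field_simp
  have hre : ((-(2 * Real.pi)) • μ).re = 0 := by simp [hpure]
  have hnorm : ‖(-(2 * Real.pi)) • μ‖ = 2 * Real.pi := by
    rw [norm_smul, hunit, mul_one, Real.norm_eq_abs, abs_neg, abs_of_pos Real.two_pi_pos]
  rw [qomega, ← NormedSpace.exp_nsmul, ← Nat.cast_smul_eq_nsmul ℝ, smul_smul, hangle,
    Quaternion.exp_of_re_eq_zero _ hre, hnorm, Real.cos_two_pi, Real.sin_two_pi]
  simp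

lemma star_qomega_mul_self (hpure : μ.re = 0) : star (qomega n μ) * qomega n μ = 1 := by
  let +nondep : NormedAlgebra ℚ ℍ := .restrictScalars ℚ ℝ ℍ
  set x := ((-(2 * Real.pi) / n : ℝ) • μ)
  have hstar : star x = -x := by
    rw [Quaternion.star_smul, Quaternion.star_eq_neg.2 hpure, smul_neg]
  rw [qomega, NormedSpace.star_exp, hstar,
    ← NormedSpace.exp_add_of_commute (Commute.refl x).neg_left, neg_add_cancel,
    NormedSpace.exp_zero]

lemma conjTranspose_qdft_apply (u k : Fin n) :
    (qdft n μ)ᴴ u k = ((Real.sqrt n)⁻¹ : ℝ) • (star (qomega n μ) ^ (k : ℕ)) ^ (u : ℕ) := by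
  rw [conjTranspose_apply, qdft, of_apply, Quaternion.star_smul, star_pow, pow_mul]

end QuaternionDFT

/-- the cyclic shift matrix `J` (with entry 1 at `(u,v)` exactly when
`u ≡ v + 1 (mod n)`) satisfies `J·F_μᴴ = F_μᴴ·Diag(1, ω, …, ω^{n−1})`; in particular the
columns of `F_μᴴ` are eigenvectors of `J` with (right) eigenvalues `1, ω, …, ω^{n−1}`. -/
theorem cyclic_shift_eigenvectors (n : ℕ) (hn : 1 ≤ n) (μ : ℍ[ℝ])
    (hpure : μ.re = 0) (hunit : ‖μ‖ = 1) (J : Matrix (Fin n) (Fin n) ℍ[ℝ])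
    (hJ : J = Matrix.of fun u v : Fin n =>
      if (u : ℕ) = ((v : ℕ) + 1) % n then (1 : ℍ[ℝ]) else 0) :
    J * (qdft n μ)ᴴ =
      (qdft n μ)ᴴ * Matrix.diagonal (fun k : Fin n => (qomega n μ) ^ (k : ℕ))
    ∧ ∀ k : Fin n,
        J.mulVec (fun u => (qdft n μ)ᴴ u k) =
          fun u => (qdft n μ)ᴴ u k * (qomega n μ) ^ (k : ℕ) := by
  have : NeZero n := .of_pos hn
  set ω := qomega n μ
  have hω : ω ^ n = 1 := qomega_pow_self (by omega) hpure hunit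
  have hσω : star ω * ω = 1 := star_qomega_mul_self hpure
  -- Column `k` of `F_μᴴ` is a geometric sequence in `(star ω)^k`, a root of unity
  -- whose right inverse is `ω^k`; the shift moves it back by one step.
  have hmain : J * (qdft n μ)ᴴ = (qdft n μ)ᴴ * diagonal (fun k : Fin n => ω ^ (k : ℕ)) := by
    refine Matrix.ext fun u k => ?_
    have hroot : (star ω ^ (k : ℕ)) ^ n = 1 := by
      rw [← pow_mul, mul_comm, pow_mul, ← star_pow, hω, star_one, one_pow]
    have hinv : star ω ^ (k : ℕ) * ω ^ (k : ℕ) = 1 := by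
      rw [← star_comm_self.mul_pow, hσω, one_pow]
    rw [hJ, cyclicShift_mul_apply, mul_diagonal, conjTranspose_qdft_apply,
      conjTranspose_qdft_apply, pow_val_sub_one hroot hinv, smul_mul_assoc]
  exact ⟨hmain, fun k => funext fun u =>
    (congrFun (congrFun hmain u) k).trans (mul_diagonal _ _ u k)⟩
end
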